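/- arXiv:0906.0947 — 2 statements merged into one kernel-verified Lean document; each statement's English description precedes it below -/
import Mathlib

section
/- Let g be a Lie algebra with a ℤ^n-grading g = ⊕_{α∈ℤ^n} g_α such that g_0 is abelian, [g_α, g_β] = g_{α+β} for all α ≠ β, and the grading is the root space decomposition with respect to g_0. Let V be a simple weight g-module in which every element is a generalized highest weight element with respect to the standard basis e_1,…,e_n of ℤ^n. Let v ∈ V be a nonzero weight vector, a ∈ ℝ^n, and β ∈ ℤ^n with a·β < 0 and g_β v = 0. Then for every w ∈ V there exists N ∈ ℕ such that g_{bβ+γ} w = 0 for every nonnegative integer b and every γ ∈ ℤ^n with γ_i > N for all i. -/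
/-! Preamble: `ℤⁿ`-graded Lie algebras whose grading is the root space
decomposition with respect to the abelian zero component, together with
weight modules, supports and related notions. -/

/-- The dot product `a · x` of a real vector with an integer vector. -/
def rdot {n : ℕ} (a : Fin n → ℝ) (x : Fin n → ℤ) : ℝ := ∑ i, a i * (x i : ℝ)

/-- A `ℤⁿ`-grading `g = ⊕ g_α` of a Lie algebra `g` over `k` such that `g₀` is
abelian, `[g_α, g_β] = g_{α+β}` for all `α ≠ β`, and the grading is the root
space decomposition of `g` with respect to `g₀` (which identifies `ℤⁿ` with a
subset of `g₀^*` via the injective additive map `wt`). -/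
structure GradedLie (k : Type*) [Field k] (n : ℕ)
    (g : Type*) [LieRing g] [LieAlgebra k g] where
  gr : (Fin n → ℤ) → Submodule k g
  isInternal : DirectSum.IsInternal gr
  bracket_le : ∀ (α β : Fin n → ℤ), ∀ x ∈ gr α, ∀ y ∈ gr β, ⁅x, y⁆ ∈ gr (α + β)
  bracket_eq : ∀ (α β : Fin n → ℤ), α ≠ β →
    Submodule.span k {z : g | ∃ x ∈ gr α, ∃ y ∈ gr β, z = ⁅x, y⁆} = gr (α + β)
  abelian : ∀ x ∈ gr 0, ∀ y ∈ gr 0, ⁅x, y⁆ = (0 : g)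
  wt : (Fin n → ℤ) → Module.Dual k ↥(gr 0)
  wt_injective : Function.Injective wt
  wt_add : ∀ α β : Fin n → ℤ, wt (α + β) = wt α + wt β
  rootSpace : ∀ α : Fin n → ℤ,
    (gr α : Set g) = {x : g | ∀ h : ↥(gr 0), ⁅(h : g), x⁆ = wt α h • x}

namespace GradedLie

variable {k : Type*} [Field k] {n : ℕ} {g : Type*} [LieRing g] [LieAlgebra k g]

variable (P : GradedLie k n g)
variable (V : Type*) [AddCommGroup V] [Module k V] [LieRingModule g V] [LieModule k g V]

/-- The weight space of `V` for the weight `lam ∈ g₀^*`. -/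
def weightSpace (lam : Module.Dual k ↥(P.gr 0)) : Submodule k V where
  carrier := {v : V | ∀ h : ↥(P.gr 0), ⁅(h : g), v⁆ = lam h • v}
  add_mem' := by
    intro u v hu hv h
    rw [lie_add, hu h, hv h, smul_add]
  zero_mem' := by intro h; rw [lie_zero, smul_zero]
  smul_mem' := by
    intro a v hv h
    rw [lie_smul, hv h, smul_comm]

/-- The support of `V`: weights with nonzero weight space. -/
def supp : Set (Module.Dual k ↥(P.gr 0)) := {lam | P.weightSpace V lam ≠ ⊥}

/-- `V` is a weight module: it is the sum of its weight spaces. -/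
def IsWeightModule : Prop :=
  ⨆ lam : Module.Dual k ↥(P.gr 0), P.weightSpace V lam = ⊤

/-- Dense: the support is a full coset `lam + ℤⁿ`. -/
def IsDense : Prop :=
  ∃ lam : Module.Dual k ↥(P.gr 0),
    P.supp V = {mu | ∃ x : Fin n → ℤ, mu = lam + P.wt x}

/-- Punctured: the support is `ℤⁿ ∖ {0}`. -/
def IsPunctured : Prop :=
  P.supp V = {mu | ∃ x : Fin n → ℤ, x ≠ 0 ∧ mu = P.wt x}

/-- Trivial module: one–dimensional with zero action. -/
def IsTrivialMod (_P : GradedLie k n g) : Prop :=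
  Module.rank k V = 1 ∧ ∀ (x : g) (v : V), ⁅x, v⁆ = 0

/-- Cut module: the support is contained in a shifted half space
`lam + b + ℤⁿ_{-0}^{(a)}`. -/
def IsCut : Prop :=
  ∃ lam ∈ P.supp V, ∃ a : Fin n → ℝ, a ≠ 0 ∧ ∃ b : Fin n → ℤ,
    ∀ mu ∈ P.supp V, ∃ x : Fin n → ℤ, rdot a x ≤ 0 ∧ mu = lam + P.wt b + P.wt x

/-- Generalized highest weight element with respect to a `ℤ`-basis `f` of `ℤⁿ`. -/
def IsGHW (f : Fin n → (Fin n → ℤ)) (v : V) : Prop :=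
  ∃ N : ℕ, ∀ m : Fin n → ℤ, (∀ i, (N : ℤ) < m i) →
    ∀ x ∈ P.gr (∑ i, m i • f i), ⁅x, v⁆ = 0

/-- Generalized highest weight element with respect to the standard basis of `ℤⁿ`:
`g_γ v = 0` whenever all `γ_i > N`. -/
def IsGHWstd (v : V) : Prop :=
  ∃ N : ℕ, ∀ γ : Fin n → ℤ, (∀ i, (N : ℤ) < γ i) →
    ∀ x ∈ P.gr γ, ⁅x, v⁆ = 0

/-- Mixed module: some weight space in the coset is infinite dimensional and
some is finite dimensional. -/
def IsMixed : Prop :=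
  ∃ lam ∈ P.supp V, ∃ x : Fin n → ℤ,
    ¬ Module.Finite k ↥(P.weightSpace V lam) ∧
      Module.Finite k ↥(P.weightSpace V (lam + P.wt x))

end GradedLie

/-!
Write `A(w)` for the set of degrees `δ` with `g_δ w = 0`. As `[g_s, g_t] = g_{s+t}` for `s ≠ t`,
`A(v)` is closed under sums of distinct elements, so starting from `β ∈ A(v)` and a large `γ`,
induction on `b` gives `b • β + γ ∈ A(v)` unless some `b • β + γ` equals `j • β` with `j ≥ 2`.
Then `γ` is a multiple of `β`: either `β > 0` and `j • β ≥ γ` is large itself, or `β < 0`.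
In the latter case every degree outside `{j • β | j ≥ 2}` lies in `A(v)`, and reordering iterated
brackets shows that any `x v ≠ 0` with `x ∈ g_{j • β}` generates a submodule whose weights all
differ from that of `v`, contradicting simplicity. Finally the `w` satisfying the conclusion form
a submodule (under `g_c` the bound `N` only grows by `|c|`) containing `v`, hence all of `V`.
-/

def highMultiples {n : ℕ} (β : Fin n → ℤ) : AddSubsemigroup (Fin n → ℤ) where
  carrier := {δ | ∃ j : ℤ, 2 ≤ j ∧ δ = j • β}
  add_mem' := by
    rintro _ _ ⟨i, hi, rfl⟩ ⟨j, hj, rfl⟩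
    exact ⟨i + j, by omega, (add_smul i j β).symm⟩

lemma zero_notMem_highMultiples {n : ℕ} {β : Fin n → ℤ} (hβ : β ≠ 0) :
    0 ∉ highMultiples β := by
  rintro ⟨j, hj, h⟩
  rcases smul_eq_zero.1 h.symm with h | h
  · omega
  · exact hβ h

namespace GradedLie

variable {k : Type*} [Field k] {n : ℕ} {g : Type*} [LieRing g] [LieAlgebra k g]
variable (P : GradedLie k n g)

lemma wt_zero : P.wt 0 = 0 := by
  simpa using P.wt_add 0 0

lemma wt_ne_zero {σ : Fin n → ℤ} (hσ : σ ≠ 0) : P.wt σ ≠ 0 := by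
  rw [← P.wt_zero]
  exact P.wt_injective.ne hσ

section LieRingModule

variable {V : Type*} [AddCommGroup V] [LieRingModule g V]

def annihilatorDegrees (v : V) : Set (Fin n → ℤ) := {δ | ∀ x ∈ P.gr δ, ⁅x, v⁆ = 0}

variable {P} in
lemma mem_annihilatorDegrees_lie {w : V} {c δ : Fin n → ℤ} {y : g} (hy : y ∈ P.gr c)
    (hδ : δ ∈ P.annihilatorDegrees w) (hδc : δ + c ∈ P.annihilatorDegrees w) :
    δ ∈ P.annihilatorDegrees ⁅y, w⁆ := by
  intro x hx
  rw [leibniz_lie, hδc _ (P.bracket_le _ _ x hx y hy), hδ x hx, lie_zero, add_zero]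

variable [Module k V]

lemma lie_mem_of_lie_gr_mem {M : Submodule k V}
    (hM : ∀ c, ∀ x ∈ P.gr c, ∀ w ∈ M, ⁅x, w⁆ ∈ M) (x : g) {w : V} (hw : w ∈ M) :
    ⁅x, w⁆ ∈ M := by
  have hx : x ∈ ⨆ c, P.gr c := by rw [P.isInternal.submodule_iSup_eq_top]; trivial
  induction hx using Submodule.iSup_induction' with
  | mem c x hx => exact hM c x hx w hw
  | zero => rw [zero_lie]; exact zero_mem M
  | add x y _ _ hx hy => rw [add_lie]; exact add_mem hx hy

lemma eq_top_of_lie_gr_mem (hsimple : IsSimpleOrder (LieSubmodule k g V)) {M : Submodule k V}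
    (hM : ∀ c, ∀ x ∈ P.gr c, ∀ w ∈ M, ⁅x, w⁆ ∈ M) {u : V} (hu : u ∈ M) (hu0 : u ≠ 0) :
    M = ⊤ := by
  let L : LieSubmodule k g V := { M with lie_mem := fun hw => P.lie_mem_of_lie_gr_mem hM _ hw }
  rcases hsimple.eq_bot_or_eq_top L with h | h
  · have huL : u ∈ L := hu
    rw [h] at huL
    exact absurd ((LieSubmodule.mem_bot u).1 huL) hu0
  · exact congrArg LieSubmodule.toSubmodule h

end LieRingModule

variable {V : Type*} [AddCommGroup V] [Module k V] [LieRingModule g V] [LieModule k g V]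

lemma lie_mem_weightSpace {c : Fin n → ℤ} {x : g} (hx : x ∈ P.gr c)
    {μ : Module.Dual k ↥(P.gr 0)} {w : V} (hw : w ∈ P.weightSpace V μ) :
    ⁅x, w⁆ ∈ P.weightSpace V (μ + P.wt c) := by
  intro h
  have hxh : ⁅(h : g), x⁆ = P.wt c h • x := (Set.ext_iff.1 (P.rootSpace c) x).1 hx h
  rw [leibniz_lie, hxh, hw h, smul_lie, lie_smul, LinearMap.add_apply, add_smul, add_comm]

lemma iSupIndep_weightSpace : iSupIndep (P.weightSpace V) := by
  let f : ↥(P.gr 0) → Module.End k V := fun h => LieModule.toEnd k g V h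
  have hcomm : ∀ h h', Commute (f h) (f h') := fun h h' => by
    ext w
    simp [f, leibniz_lie (h : g) (h' : g) w, P.abelian h h.2 h' h'.2]
  have hindep := (Module.End.independent_iInf_maxGenEigenspace_of_forall_mapsTo f
    fun h h' φ => Module.End.mapsTo_maxGenEigenspace_of_comm (hcomm h' h) φ).comp
    (DFunLike.coe_injective (F := Module.Dual k ↥(P.gr 0)))
  refine hindep.mono fun μ => le_iInf fun h w hw => ?_
  exact Module.End.eigenspace_le_maxGenEigenspace (Module.End.mem_eigenspace_iff.2 (hw h))

variable {P}

lemma add_mem_annihilatorDegrees {v : V} {s t : Fin n → ℤ} (hst : s ≠ t)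
    (hs : s ∈ P.annihilatorDegrees v) (ht : t ∈ P.annihilatorDegrees v) :
    s + t ∈ P.annihilatorDegrees v := by
  intro z hz
  rw [← P.bracket_eq s t hst] at hz
  induction hz using Submodule.span_induction with
  | mem z hz =>
    obtain ⟨x, hx, y, hy, rfl⟩ := hz
    rw [lie_lie, hs x hx, ht y hy, lie_zero, lie_zero, sub_zero]
  | zero => exact zero_lie v
  | add x y _ _ hx hy => rw [add_lie, hx, hy, add_zero]
  | smul t x _ hx => rw [smul_lie, hx, smul_zero]

section Chains

variable (P)

def bracketSpan (c : Fin n → ℤ) (W : Submodule k V) : Submodule k V :=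
  Submodule.map₂ (LieModule.toEnd k g V : g →ₗ[k] Module.End k V) (P.gr c) W

/-- `chain W [c₁, …, cᵣ]` is the span of `⁅g_{c₁}, ⁅…, ⁅g_{cᵣ}, W⁆…⁆⁆`. -/
def chain (W : Submodule k V) (l : List (Fin n → ℤ)) : Submodule k V :=
  l.foldr P.bracketSpan W

variable {P}

lemma lie_mem_bracketSpan {c : Fin n → ℤ} {W : Submodule k V} {x : g} (hx : x ∈ P.gr c)
    {w : V} (hw : w ∈ W) : ⁅x, w⁆ ∈ P.bracketSpan c W :=
  Submodule.apply_mem_map₂ _ hx hw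

lemma bracketSpan_le {c : Fin n → ℤ} {W M : Submodule k V} :
    P.bracketSpan c W ≤ M ↔ ∀ x ∈ P.gr c, ∀ w ∈ W, ⁅x, w⁆ ∈ M :=
  Submodule.map₂_le

lemma bracketSpan_mono {c : Fin n → ℤ} {W W' : Submodule k V} (h : W ≤ W') :
    P.bracketSpan c W ≤ P.bracketSpan c W' :=
  Submodule.map₂_le_map₂_right h

lemma bracketSpan_bracketSpan_le (a b : Fin n → ℤ) (W : Submodule k V) :
    P.bracketSpan a (P.bracketSpan b W) ≤
      P.bracketSpan b (P.bracketSpan a W) ⊔ P.bracketSpan (a + b) W := by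
  set M := P.bracketSpan b (P.bracketSpan a W) ⊔ P.bracketSpan (a + b) W
  refine bracketSpan_le.2 fun x hx s hs => ?_
  suffices P.bracketSpan b W ≤ M.comap (LieModule.toEnd k g V x) from this hs
  refine bracketSpan_le.2 fun y hy w hw => ?_
  rw [Submodule.mem_comap, LieModule.toEnd_apply_apply, leibniz_lie]
  exact add_mem (Submodule.mem_sup_right (lie_mem_bracketSpan (P.bracket_le a b x hx y hy) hw))
    (Submodule.mem_sup_left (lie_mem_bracketSpan hy (lie_mem_bracketSpan hx hw)))

lemma bracketSpan_span_singleton_eq_bot {v : V} {c : Fin n → ℤ}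
    (hc : c ∈ P.annihilatorDegrees v) : P.bracketSpan c (Submodule.span k {v}) = ⊥ := by
  refine eq_bot_iff.2 (bracketSpan_le.2 fun x hx w hw => ?_)
  obtain ⟨t, rfl⟩ := Submodule.mem_span_singleton.1 hw
  rw [lie_smul, hc x hx, smul_zero]
  exact zero_mem _

@[simp]
lemma chain_nil (W : Submodule k V) : P.chain W [] = W := rfl

@[simp]
lemma chain_cons (W : Submodule k V) (c : Fin n → ℤ) (l : List (Fin n → ℤ)) :
    P.chain W (c :: l) = P.bracketSpan c (P.chain W l) := rfl

lemma chain_append (W : Submodule k V) (l₀ l₁ : List (Fin n → ℤ)) :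
    P.chain W (l₀ ++ l₁) = P.chain (P.chain W l₁) l₀ :=
  List.foldr_append

lemma chain_mono {W W' : Submodule k V} (h : W ≤ W') (l : List (Fin n → ℤ)) :
    P.chain W l ≤ P.chain W' l := by
  induction l with
  | nil => exact h
  | cons c l ih => exact bracketSpan_mono ih

lemma chain_bot (l : List (Fin n → ℤ)) : P.chain (⊥ : Submodule k V) l = ⊥ := by
  induction l with
  | nil => rfl
  | cons c l ih => rw [chain_cons, ih, bracketSpan, Submodule.map₂_bot_right]

lemma chain_sup (W W' : Submodule k V) (l : List (Fin n → ℤ)) :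
    P.chain (W ⊔ W') l = P.chain W l ⊔ P.chain W' l := by
  induction l with
  | nil => rfl
  | cons c l ih => rw [chain_cons, ih, bracketSpan, Submodule.map₂_sup_right]; rfl

lemma chain_le_weightSpace {μ : Module.Dual k ↥(P.gr 0)} {W : Submodule k V}
    (h : W ≤ P.weightSpace V μ) (l : List (Fin n → ℤ)) :
    P.chain W l ≤ P.weightSpace V (μ + P.wt l.sum) := by
  induction l with
  | nil => simpa [P.wt_zero] using h
  | cons c l ih =>
    refine bracketSpan_le.2 fun x hx w hw => ?_
    rw [List.sum_cons, add_comm c, P.wt_add, ← add_assoc]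
    exact P.lie_mem_weightSpace hx (ih hw)

lemma lie_mem_iSup_chain (W : Submodule k V) (c : Fin n → ℤ) :
    ∀ x ∈ P.gr c, ∀ w ∈ ⨆ l, P.chain W l, ⁅x, w⁆ ∈ ⨆ l, P.chain W l := by
  intro x hx w hw
  induction hw using Submodule.iSup_induction' with
  | mem l w hw => exact Submodule.mem_iSup_of_mem (c :: l) (lie_mem_bracketSpan hx hw)
  | zero => rw [lie_zero]; exact zero_mem _
  | add w w' _ _ hw hw' => rw [lie_add]; exact add_mem hw hw'

end Chains

section Reordering

variable {S : AddSubsemigroup (Fin n → ℤ)} {v : V}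

lemma exists_mem_notMem_of_sum_notMem {l : List (Fin n → ℤ)} (hl : l ≠ [])
    (hsum : l.sum ∉ S) : ∃ c ∈ l, c ∉ S := by
  induction l with
  | nil => exact absurd rfl hl
  | cons d l ih =>
    by_cases hd : d ∈ S
    · rcases eq_or_ne l [] with rfl | hl'
      · simp_all
      · obtain ⟨c, hc, hcS⟩ := ih hl' fun h => hsum (by rw [List.sum_cons]; exact add_mem hd h)
        exact ⟨c, List.mem_cons_of_mem d hc, hcS⟩
    · exact ⟨d, List.mem_cons_self, hd⟩

/-- Moving a factor `c ∉ S` to the right end of a chain only creates commutator terms, which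
are shorter chains of the same degree. -/
lemma chain_append_cons_eq_bot (hS : ∀ δ ∉ S, δ ∈ P.annihilatorDegrees v) {L : ℕ}
    (hshort : ∀ l : List (Fin n → ℤ), l.length < L → l ≠ [] → l.sum ∉ S →
      P.chain (Submodule.span k {v}) l = ⊥)
    {c : Fin n → ℤ} (hc : c ∉ S) (l₁ l₀ : List (Fin n → ℤ)) (hlen : (l₀ ++ c :: l₁).length = L)
    (hsum : (l₀ ++ c :: l₁).sum ∉ S) : P.chain (Submodule.span k {v}) (l₀ ++ c :: l₁) = ⊥ := by
  induction l₁ generalizing l₀ with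
  | nil =>
    rw [chain_append, chain_cons, chain_nil, bracketSpan_span_singleton_eq_bot (hS c hc),
      chain_bot]
  | cons d l₂ ih =>
    have hswap : P.chain (Submodule.span k {v}) (l₀ ++ c :: d :: l₂) ≤
        P.chain (Submodule.span k {v}) ((l₀ ++ [d]) ++ c :: l₂) ⊔
          P.chain (Submodule.span k {v}) (l₀ ++ (c + d) :: l₂) := by
      simp only [chain_append, chain_cons, chain_nil, ← chain_sup]
      exact chain_mono (bracketSpan_bracketSpan_le c d _) l₀
    have hperm : ((l₀ ++ [d]) ++ c :: l₂).sum = (l₀ ++ c :: d :: l₂).sum := by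
      simp only [List.sum_append, List.sum_cons, List.sum_nil]; abel
    have hmerge : (l₀ ++ (c + d) :: l₂).sum = (l₀ ++ c :: d :: l₂).sum := by
      simp only [List.sum_append, List.sum_cons]; abel
    have hlen' : (l₀ ++ (c + d) :: l₂).length < L := by
      rw [← hlen]; simp
    refine le_bot_iff.1 (hswap.trans ?_)
    rw [ih (l₀ ++ [d]) (by rw [← hlen]; simp) (hperm ▸ hsum),
      hshort _ hlen' (by simp) (hmerge ▸ hsum), sup_bot_eq]

lemma chain_eq_bot_of_sum_notMem (hS : ∀ δ ∉ S, δ ∈ P.annihilatorDegrees v)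
    (l : List (Fin n → ℤ)) (hl : l ≠ []) (hsum : l.sum ∉ S) :
    P.chain (Submodule.span k {v}) l = ⊥ := by
  induction hL : l.length using Nat.strong_induction_on generalizing l with
  | _ L ih =>
    obtain ⟨c, hcl, hc⟩ := exists_mem_notMem_of_sum_notMem hl hsum
    obtain ⟨l₀, l₁, rfl⟩ := List.append_of_mem hcl
    exact chain_append_cons_eq_bot hS (fun l hlt hl hs => ih _ hlt l hl hs rfl) hc l₁ l₀ hL hsum

lemma chain_le_iSup_weightSpace_ne (h0 : 0 ∉ S) {lam : Module.Dual k ↥(P.gr 0)}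
    (hv : v ∈ P.weightSpace V lam) (hS : ∀ δ ∉ S, δ ∈ P.annihilatorDegrees v)
    {l : List (Fin n → ℤ)} (hl : l ≠ []) :
    P.chain (Submodule.span k {v}) l ≤ ⨆ (μ) (_ : μ ≠ lam), P.weightSpace V μ := by
  by_cases hsum : l.sum ∈ S
  · have hwt : lam + P.wt l.sum ≠ lam := by
      simpa using P.wt_ne_zero (ne_of_mem_of_not_mem hsum h0)
    exact (chain_le_weightSpace ((Submodule.span_singleton_le_iff_mem _ _).2 hv) l).trans
      (le_iSup₂_of_le _ hwt le_rfl)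
  · rw [chain_eq_bot_of_sum_notMem hS l hl hsum]
    exact bot_le

/-- A nonzero `x v` with `x ∈ g_S` would generate `V`, but every chain on `x v` has weight in
`lam + S` or vanishes, so `v` could not lie in it. -/
lemma annihilatorDegrees_eq_univ (hsimple : IsSimpleOrder (LieSubmodule k g V)) (h0 : 0 ∉ S)
    {lam : Module.Dual k ↥(P.gr 0)} (hv : v ∈ P.weightSpace V lam) (hv0 : v ≠ 0)
    (hS : ∀ δ ∉ S, δ ∈ P.annihilatorDegrees v) : P.annihilatorDegrees v = Set.univ := by
  refine Set.eq_univ_of_forall fun δ x hx => ?_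
  by_contra hu0
  have hu : ⁅x, v⁆ ∈ ⨆ l, P.chain (Submodule.span k {⁅x, v⁆}) l :=
    Submodule.mem_iSup_of_mem [] (Submodule.mem_span_singleton_self _)
  have htop := P.eq_top_of_lie_gr_mem hsimple (lie_mem_iSup_chain _) hu hu0
  have hle : ⨆ l, P.chain (Submodule.span k {⁅x, v⁆}) l ≤
      ⨆ (μ) (_ : μ ≠ lam), P.weightSpace V μ := by
    refine iSup_le fun l => ?_
    have hspan : Submodule.span k {⁅x, v⁆} ≤ P.chain (Submodule.span k {v}) [δ] :=
      (Submodule.span_singleton_le_iff_mem _ _).2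
        (lie_mem_bracketSpan hx (Submodule.mem_span_singleton_self v))
    refine (chain_mono hspan l).trans ?_
    rw [← chain_append]
    exact chain_le_iSup_weightSpace_ne h0 hv hS (by simp)
  have hv' : v ∈ ⨆ (μ) (_ : μ ≠ lam), P.weightSpace V μ := hle (htop ▸ Submodule.mem_top)
  exact hv0 (Submodule.disjoint_def.1 (P.iSupIndep_weightSpace lam) v hv hv')

end Reordering

section Multiples

variable {v : V} {β : Fin n → ℤ}

lemma smul_add_mem_annihilatorDegrees_or_mem_highMultiples
    (hβ : β ∈ P.annihilatorDegrees v) {δ : Fin n → ℤ} (hδ : δ ∈ P.annihilatorDegrees v)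
    (m : ℕ) : (m : ℤ) • β + δ ∈ P.annihilatorDegrees v ∨ (m : ℤ) • β + δ ∈ highMultiples β := by
  induction m with
  | zero => left; simpa using hδ
  | succ m ih =>
    have hsucc : ((m + 1 : ℕ) : ℤ) • β + δ = β + ((m : ℤ) • β + δ) := by
      push_cast; rw [add_smul, one_smul]; abel
    rw [hsucc]
    rcases ih with h | ⟨j, hj, hjβ⟩
    · by_cases hβm : β = (m : ℤ) • β + δ
      · exact Or.inr ⟨2, le_rfl, by rw [← hβm, two_smul]⟩
      · exact Or.inl (add_mem_annihilatorDegrees hβm hβ h)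
    · exact Or.inr ⟨j + 1, by omega, by rw [hjβ, add_smul, one_smul, add_comm]⟩

/-- Write `δ = m • β + (δ - m • β)`: as `β < 0`, the second summand is large once `m` is. -/
lemma mem_annihilatorDegrees_of_notMem_highMultiples {N : ℕ}
    (hN : ∀ γ : Fin n → ℤ, (∀ i, (N : ℤ) < γ i) → γ ∈ P.annihilatorDegrees v)
    (hβ : β ∈ P.annihilatorDegrees v) (hβneg : ∀ i, β i < 0) {δ : Fin n → ℤ}
    (hδ : δ ∉ highMultiples β) : δ ∈ P.annihilatorDegrees v := by
  obtain ⟨M, hM⟩ := Finite.exists_le fun i => (δ i).natAbs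
  set m : ℕ := N + M + 1
  have hγ : ∀ i, (N : ℤ) < (δ - (m : ℤ) • β) i := by
    intro i
    have hδi : -(δ i) ≤ M := by have := hM i; omega
    have hmβ : (m : ℤ) ≤ (m : ℤ) * -β i :=
      le_mul_of_one_le_right (by positivity) (by linarith [hβneg i])
    simp only [Pi.sub_apply, Pi.smul_apply, smul_eq_mul, m] at hmβ ⊢
    push_cast at hmβ ⊢
    linarith
  have hdecomp : (m : ℤ) • β + (δ - (m : ℤ) • β) = δ := add_sub_cancel _ _
  rcases smul_add_mem_annihilatorDegrees_or_mem_highMultiples hβ (hN _ hγ) m with h | h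
  · rwa [hdecomp] at h
  · exact absurd (hdecomp ▸ h) hδ

/-- If `b • β + γ = j • β`, then `γ = (j - b) • β` has all coordinates above `N`; either `β` and
`j - b` are positive, so that `j • β ≥ γ` is large, or `β` is strictly negative and
`annihilatorDegrees_eq_univ` applies. -/
lemma smul_add_mem_annihilatorDegrees (hsimple : IsSimpleOrder (LieSubmodule k g V))
    {lam : Module.Dual k ↥(P.gr 0)} (hv : v ∈ P.weightSpace V lam) (hv0 : v ≠ 0)
    {N : ℕ} (hN : ∀ γ : Fin n → ℤ, (∀ i, (N : ℤ) < γ i) → γ ∈ P.annihilatorDegrees v)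
    (hβ : β ∈ P.annihilatorDegrees v) (b : ℕ) {γ : Fin n → ℤ}
    (hγ : ∀ i, (N : ℤ) < γ i) : (b : ℤ) • β + γ ∈ P.annihilatorDegrees v := by
  by_cases hβ0 : β = 0
  · simpa [hβ0] using hN γ hγ
  rcases smul_add_mem_annihilatorDegrees_or_mem_highMultiples hβ (hN γ hγ) b with h | ⟨j, -, hj⟩
  · exact h
  rw [hj]
  have hγj : ∀ i, γ i = (j - b) * β i := fun i => by
    have := congrFun hj i
    simp only [Pi.add_apply, Pi.smul_apply, smul_eq_mul] at this
    linarith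
  have hpos : ∀ i, 0 < (j - b) * β i := fun i =>
    hγj i ▸ lt_of_le_of_lt (Nat.cast_nonneg N) (hγ i)
  obtain ⟨i₀, hi₀⟩ := Function.ne_iff.1 hβ0
  rcases lt_or_gt_of_ne (left_ne_zero_of_mul (hpos i₀).ne') with hd | hd
  · have hβneg : ∀ i, β i < 0 := fun i => neg_of_mul_pos_right (hpos i) hd.le
    rw [annihilatorDegrees_eq_univ hsimple (zero_notMem_highMultiples hβ0) hv hv0
      fun δ hδ => mem_annihilatorDegrees_of_notMem_highMultiples hN hβ hβneg hδ]
    trivial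
  · refine hN _ fun i => ?_
    have hβi : 0 < β i := pos_of_mul_pos_right (hpos i) hd.le
    have := hγ i
    rw [hγj i] at this
    simp only [Pi.smul_apply, smul_eq_mul]
    nlinarith [Int.natCast_nonneg b]

end Multiples

variable (P V) in
def eventuallyAnnihilated {ι : Type*} (d : ι → Fin n → ℤ) : Submodule k V where
  carrier := {w | ∃ N : ℕ, ∀ i γ, (∀ j, (N : ℤ) < γ j) → d i + γ ∈ P.annihilatorDegrees w}
  add_mem' := by
    rintro w w' ⟨N, hN⟩ ⟨N', hN'⟩
    refine ⟨max N N', fun i γ hγ x hx => ?_⟩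
    have hγN : ∀ j, (N : ℤ) < γ j := fun j => by have := hγ j; omega
    have hγN' : ∀ j, (N' : ℤ) < γ j := fun j => by have := hγ j; omega
    rw [lie_add, hN i γ hγN x hx, hN' i γ hγN' x hx, add_zero]
  zero_mem' := ⟨0, fun _ _ _ x _ => lie_zero x⟩
  smul_mem' := by
    rintro t w ⟨N, hN⟩
    exact ⟨N, fun i γ hγ x hx => by rw [lie_smul, hN i γ hγ x hx, smul_zero]⟩

lemma lie_mem_eventuallyAnnihilated {ι : Type*} {d : ι → Fin n → ℤ} (c : Fin n → ℤ) :
    ∀ y ∈ P.gr c, ∀ w ∈ P.eventuallyAnnihilated V d, ⁅y, w⁆ ∈ P.eventuallyAnnihilated V d := by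
  rintro y hy w ⟨N, hN⟩
  obtain ⟨M, hM⟩ := Finite.exists_le fun j : Fin n => (c j).natAbs
  refine ⟨N + M, fun i γ hγ => mem_annihilatorDegrees_lie hy (hN i γ fun j => ?_) ?_⟩
  · have := hγ j
    omega
  · rw [add_assoc]
    refine hN i (γ + c) fun j => ?_
    have := hγ j
    have := hM j
    simp only [Pi.add_apply]
    omega

end GradedLie

theorem graded_annihilation_propagates_general
    (k : Type*) [Field k] (n : ℕ)
    (g : Type*) [LieRing g] [LieAlgebra k g] (P : GradedLie k n g)
    (V : Type*) [AddCommGroup V] [Module k V] [LieRingModule g V] [LieModule k g V]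
    (hsimple : IsSimpleOrder (LieSubmodule k g V))
    (hghw : ∀ v : V, P.IsGHWstd V v)
    (lam : Module.Dual k ↥(P.gr 0))
    (v : V) (hv : v ∈ P.weightSpace V lam) (hv0 : v ≠ 0)
    (β : Fin n → ℤ)
    (hann : ∀ x ∈ P.gr β, ⁅x, v⁆ = 0) :
    ∀ w : V, ∃ N : ℕ, ∀ (b : ℕ) (γ : Fin n → ℤ), (∀ i, (N : ℤ) < γ i) →
      ∀ x ∈ P.gr ((b : ℤ) • β + γ), ⁅x, w⁆ = 0 := by
  obtain ⟨N, hN⟩ := hghw v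
  have hvM : v ∈ P.eventuallyAnnihilated V fun b : ℕ => (b : ℤ) • β :=
    ⟨N, fun b _ hγ => GradedLie.smul_add_mem_annihilatorDegrees hsimple hv hv0 hN hann b hγ⟩
  have htop := P.eq_top_of_lie_gr_mem hsimple GradedLie.lie_mem_eventuallyAnnihilated hvM hv0
  intro w
  exact (htop ▸ Submodule.mem_top : w ∈ P.eventuallyAnnihilated V fun b : ℕ => (b : ℤ) • β)

/-- Let `V` be a simple weight module in which every element
is a generalized highest weight element (w.r.t. the standard basis).  If a
nonzero weight vector `v` satisfies `g_β v = 0` for some `β` with `a·β < 0`,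
then for every `w ∈ V` there is `N` with `g_{bβ+γ} w = 0` for all `b ∈ ℕ` and
all `γ` with `γ_i > N` for all `i`. -/
theorem graded_annihilation_propagates
    (k : Type*) [Field k] [IsAlgClosed k] [CharZero k] (n : ℕ) (hn : 0 < n)
    (g : Type*) [LieRing g] [LieAlgebra k g] (P : GradedLie k n g)
    (V : Type*) [AddCommGroup V] [Module k V] [LieRingModule g V] [LieModule k g V]
    (hsimple : IsSimpleOrder (LieSubmodule k g V))
    (hwt : P.IsWeightModule V)
    (hghw : ∀ v : V, P.IsGHWstd V v)
    (lam : Module.Dual k ↥(P.gr 0))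
    (v : V) (hv : v ∈ P.weightSpace V lam) (hv0 : v ≠ 0)
    (a : Fin n → ℝ) (β : Fin n → ℤ) (hβ : rdot a β < 0)
    (hann : ∀ x ∈ P.gr β, ⁅x, v⁆ = 0) :
    ∀ w : V, ∃ N : ℕ, ∀ (b : ℕ) (γ : Fin n → ℤ), (∀ i, (N : ℤ) < γ i) →
      ∀ x ∈ P.gr ((b : ℤ) • β + γ), ⁅x, w⁆ = 0 :=
  graded_annihilation_propagates_general k n g P V hsimple hghw lam v hv hv0 β hann
end

section
/- Let g be a Lie algebra with a ℤ^n-grading g = ⊕_{α∈ℤ^n} g_α such that g_0 is abelian, [g_α, g_β] = g_{α+β} for all α ≠ β, and the grading is the root space decomposition with respect to g_0. Let V be a simple mixed weight g-module, λ ∈ supp(V), and Λ = λ + ℤ^n. Let μ_1,…,μ_k ∈ supp^fin(V) and a_1,…,a_k be positive real numbers with a_1 + ⋯ + a_k = 1, and suppose μ := a_1 μ_1 + ⋯ + a_k μ_k (a convex combination formed inside the real affine space containing the lattice coset Λ) lies in Λ. Then either μ = 0 (the zero weight) or μ ∈ supp^fin(V) (that is, dim V_μ < ∞). -/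
/-! Put `μ = λ + y` and `d i = x i - y`, so that `∑ a i • d i = 0` with all `a i > 0`. Rational
points are dense in the real solution space of this integral system, so there are also positive
integers `m i` with `∑ m i • d i = 0`. Let `I` be the left ideal of `End V` generated by the
action of the components `g_{d i}`. The degrees whose component acts inside `I` are closed under
adding two distinct degrees, since `[g_α, g_β] = g_{α+β}`; merging the terms of the integral
relation two at a time therefore shows that `g_0` acts inside `I`. Taking `h ∈ g_0` with
`μ h ≠ 0`, we get `h = ∑ T_r z_r` on `V` with `z_r ∈ g_{d i_r}`, so `v ↦ (z_r v)_r` embeds `V_μ`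
into the finite-dimensional space `⨁ V_{μ + d i_r}`. -/

theorem exists_pos_rat_relation_of_real {ι κ : Type*} [Fintype ι] (d : ι → κ → ℤ) (a : ι → ℝ)
    (ha : ∀ i, 0 < a i) (hrel : ∀ j, ∑ i, a i * d i j = 0) :
    ∃ c : ι → ℚ, (∀ i, 0 < c i) ∧ ∀ j, ∑ i, c i * d i j = 0 := by
  -- Expanding the `a i` in a `ℚ`-basis `b` of their `ℚ`-span splits `hrel` into rational
  -- relations; replacing `b` by a nearby rational vector keeps the coefficients positive.
  classical
  let W := Submodule.span ℚ (Set.range a)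
  have : FiniteDimensional ℚ W := FiniteDimensional.span_of_finite ℚ (Set.finite_range a)
  have haW : ∀ i, a i ∈ W := fun i => Submodule.subset_span ⟨i, rfl⟩
  let b := Module.finBasis ℚ W
  let q : ι → Fin (Module.finrank ℚ W) → ℚ := fun i => b.repr ⟨a i, haW i⟩
  have ha_eq : ∀ i, a i = ∑ s, (q i s : ℝ) * b s := by
    intro i
    calc a i = ((∑ s, b.repr ⟨a i, haW i⟩ s • b s : W) : ℝ) := by rw [b.sum_repr]
      _ = _ := by simp only [Submodule.coe_sum, Submodule.coe_smul, Rat.smul_def, q]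
  have hq_rel : ∀ j s, ∑ i, q i s * d i j = 0 := by
    intro j s
    have hW : ∑ i, (d i j : ℚ) • (⟨a i, haW i⟩ : W) = 0 := by
      ext
      simp only [Submodule.coe_sum, Submodule.coe_smul, Rat.smul_def, Rat.cast_intCast,
        Submodule.coe_zero]
      simp_rw [mul_comm (d _ j : ℝ)]
      exact hrel j
    have := congrArg (fun w => b.repr w s) hW
    simp only [map_sum, map_smul, Finsupp.coe_finsetSum, Finset.sum_apply, Finsupp.smul_apply,
      smul_eq_mul, map_zero, Finsupp.coe_zero, Pi.zero_apply] at this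
    simpa only [q, mul_comm] using this
  let U : Set (Fin (Module.finrank ℚ W) → ℝ) := {t | ∀ i, 0 < ∑ s, (q i s : ℝ) * t s}
  have hU : IsOpen U := by
    simp only [U, Set.ofPred_forall]
    exact isOpen_iInter_of_finite fun i => isOpen_lt continuous_const (by fun_prop)
  obtain ⟨t, htU⟩ := (DenseRange.piMap fun _ => Rat.denseRange_cast).exists_mem_open hU
    ⟨fun s => b s, fun i => by simpa [← ha_eq] using ha i⟩
  refine ⟨fun i => ∑ s, q i s * t s, fun i => ?_, fun j => ?_⟩
  · have := htU i
    simp only [Pi.map_apply] at this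
    exact_mod_cast this
  · simp_rw [Finset.sum_mul]
    rw [Finset.sum_comm]
    refine Finset.sum_eq_zero fun s _ => ?_
    simp_rw [mul_right_comm _ (t s)]
    rw [← Finset.sum_mul, hq_rel, zero_mul]

theorem Rat.exists_nat_mul_eq_natCast {ι : Type*} [Fintype ι] (c : ι → ℚ) (hc : ∀ i, 0 ≤ c i) :
    ∃ D : ℕ, 0 < D ∧ ∃ m : ι → ℕ, ∀ i, (m i : ℚ) = D * c i := by
  classical
  refine ⟨∏ i, (c i).den, Finset.prod_pos fun i _ => (c i).pos,
    fun i => (∏ j ∈ Finset.univ.erase i, (c j).den) * (c i).num.toNat, fun i => ?_⟩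
  have hnum : ((c i).num.toNat : ℚ) = (c i).den * c i := by
    rw [mul_comm, Rat.mul_den_eq_num]
    exact_mod_cast Int.toNat_of_nonneg (Rat.num_nonneg.mpr (hc i))
  push_cast
  rw [hnum, ← mul_assoc, Finset.prod_erase_mul _ _ (Finset.mem_univ i)]

theorem exists_pos_nat_relation_of_rat {ι κ : Type*} [Fintype ι] (d : ι → κ → ℤ) (c : ι → ℚ)
    (hc : ∀ i, 0 < c i) (hrel : ∀ j, ∑ i, c i * d i j = 0) :
    ∃ m : ι → ℕ, (∀ i, 0 < m i) ∧ ∑ i, m i • d i = 0 := by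
  obtain ⟨D, hD, m, hm⟩ := Rat.exists_nat_mul_eq_natCast c fun i => (hc i).le
  refine ⟨m, fun i => ?_, funext fun j => ?_⟩
  · exact_mod_cast (hm i).symm ▸ mul_pos (Nat.cast_pos.mpr hD) (hc i)
  · have : ((∑ i, m i • d i j : ℤ) : ℚ) = D * ∑ i, c i * d i j := by
      simp only [nsmul_eq_mul, Int.cast_sum, Int.cast_mul, Int.cast_natCast, hm, Finset.mul_sum,
        mul_assoc]
    rw [hrel j, mul_zero] at this
    simpa only [Finset.sum_apply, Pi.smul_apply, Pi.zero_apply] using Int.cast_eq_zero.mp this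

theorem zero_mem_of_add_multiset_sum_eq_zero {G : Type*} [AddCommGroup G] [IsAddTorsionFree G]
    {R : Set G} (hR : ∀ a ∈ R, ∀ b ∈ R, a ≠ b → a + b ∈ R) (M : Multiset G) :
    ∀ s ∈ R, s ≠ 0 → (∀ c ∈ M, c ∈ R ∧ c ≠ 0) → s + M.sum = 0 → (0 : G) ∈ R := by
  classical
  induction M using Multiset.strongInductionOn with
  | _ M ih =>
  intro s hs hs0 hM hsum
  by_cases hall : ∀ c ∈ M, c = s
  · rw [Multiset.eq_replicate_card.mpr hall, Multiset.sum_replicate, ← succ_nsmul',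
      nsmul_eq_zero_iff_right (Nat.succ_ne_zero _)] at hsum
    exact absurd hsum hs0
  obtain ⟨c, hcM, hcs⟩ := not_forall₂.mp hall
  have hsc : s + c ∈ R := hR s hs c (hM c hcM).1 (Ne.symm hcs)
  by_cases hsc0 : s + c = 0
  · rwa [hsc0] at hsc
  refine ih (M.erase c) (Multiset.erase_lt.mpr hcM) (s + c) hsc hsc0
    (fun b hb => hM b (Multiset.mem_of_mem_erase hb)) ?_
  rwa [add_assoc, ← Multiset.sum_cons, Multiset.cons_erase hcM]

theorem zero_mem_of_sum_nsmul_eq_zero {G ι : Type*} [AddCommGroup G] [IsAddTorsionFree G]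
    [Fintype ι] [Nonempty ι] {R : Set G} (hR : ∀ a ∈ R, ∀ b ∈ R, a ≠ b → a + b ∈ R)
    (d : ι → G) (hdR : ∀ i, d i ∈ R) (hd0 : ∀ i, d i ≠ 0) (m : ι → ℕ) (hm : ∀ i, 0 < m i)
    (hrel : ∑ i, m i • d i = 0) : (0 : G) ∈ R := by
  classical
  let M := ∑ i, Multiset.replicate (m i) (d i)
  have hMR : ∀ c ∈ M, c ∈ R ∧ c ≠ 0 := by
    intro c hc
    obtain ⟨i, -, hci⟩ := Multiset.mem_sum.mp hc
    rw [Multiset.eq_of_mem_replicate hci]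
    exact ⟨hdR i, hd0 i⟩
  have hMsum : M.sum = 0 := by
    simpa [M, Multiset.sum_sum, Multiset.sum_replicate] using hrel
  obtain ⟨i⟩ := ‹Nonempty ι›
  have hiM : d i ∈ M := Multiset.mem_sum.mpr ⟨i, Finset.mem_univ i,
    Multiset.mem_replicate.mpr ⟨(hm i).ne', rfl⟩⟩
  obtain ⟨M', hM'⟩ := Multiset.exists_cons_of_mem hiM
  refine zero_mem_of_add_multiset_sum_eq_zero hR M' (d i) (hdR i) (hd0 i)
    (fun c hc => hMR c (hM' ▸ Multiset.mem_cons_of_mem hc)) ?_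
  rw [← Multiset.sum_cons, ← hM', hMsum]

namespace GradedLie

variable {k : Type*} [Field k] {n : ℕ} {g : Type*} [LieRing g] [LieAlgebra k g]
variable (P : GradedLie k n g)
variable (V : Type*) [AddCommGroup V] [Module k V] [LieRingModule g V] [LieModule k g V]

theorem lie_mem_weightSpace_s16 {α : Fin n → ℤ} {z : g} (hz : z ∈ P.gr α)
    {lam : Module.Dual k ↥(P.gr 0)} {v : V} (hv : v ∈ P.weightSpace V lam) :
    ⁅z, v⁆ ∈ P.weightSpace V (lam + P.wt α) := by
  intro h
  have hhz : ⁅(h : g), z⁆ = P.wt α h • z := (Set.ext_iff.mp (P.rootSpace α) z).mp hz h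
  rw [leibniz_lie, hhz, hv h, smul_lie, lie_smul, LinearMap.add_apply, add_smul, add_comm]

def degreesIn (I : Ideal (Module.End k V)) : Set (Fin n → ℤ) :=
  {α | ∀ z ∈ P.gr α, LieModule.toEnd k g V z ∈ I}

/-- `Ideal` of the noncommutative ring `End V` means left ideal. -/
def actionIdeal (D : Set (Fin n → ℤ)) : Ideal (Module.End k V) :=
  Ideal.span {f | ∃ α ∈ D, ∃ z ∈ P.gr α, f = LieModule.toEnd k g V z}

theorem mem_degreesIn_actionIdeal {D : Set (Fin n → ℤ)} {α : Fin n → ℤ} (hα : α ∈ D) :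
    α ∈ P.degreesIn V (P.actionIdeal V D) :=
  fun z hz => Ideal.subset_span ⟨α, hα, z, hz, rfl⟩

variable {V} in
theorem add_mem_degreesIn {I : Ideal (Module.End k V)} {α β : Fin n → ℤ} (hne : α ≠ β)
    (hα : α ∈ P.degreesIn V I) (hβ : β ∈ P.degreesIn V I) : α + β ∈ P.degreesIn V I := by
  intro z hz
  rw [← P.bracket_eq α β hne] at hz
  refine (Submodule.span_le (p := (I.restrictScalars k).comap
    (LieModule.toEnd k g V : g →ₗ[k] Module.End k V))).mpr ?_ hz
  rintro _ ⟨x, hx, y, hy, rfl⟩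
  have hcomm : LieModule.toEnd k g V ⁅x, y⁆ = LieModule.toEnd k g V x * LieModule.toEnd k g V y -
      LieModule.toEnd k g V y * LieModule.toEnd k g V x :=
    LinearMap.ext fun v => lie_lie x y v
  change LieModule.toEnd k g V ⁅x, y⁆ ∈ I
  rw [hcomm]
  exact I.sub_mem (I.mul_mem_left _ (hβ y hy)) (I.mul_mem_left _ (hα x hx))

theorem finite_weightSpace_of_zero_mem_degreesIn {D : Set (Fin n → ℤ)}
    {μ : Module.Dual k ↥(P.gr 0)} (hμ : μ ≠ 0) (h0 : 0 ∈ P.degreesIn V (P.actionIdeal V D))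
    (hfin : ∀ α ∈ D, Module.Finite k ↥(P.weightSpace V (μ + P.wt α))) :
    Module.Finite k ↥(P.weightSpace V μ) := by
  obtain ⟨h, hh⟩ : ∃ h, μ h ≠ 0 := by
    by_contra! hμ0
    exact hμ (LinearMap.ext hμ0)
  obtain ⟨T, hTS, hhT⟩ := Submodule.mem_span_finite_of_mem_span (h0 h h.2)
  choose α hαD z hz hzt using fun t : T => hTS t.2
  have : ∀ t, Module.Finite k ↥(P.weightSpace V (μ + P.wt (α t))) :=
    fun t => hfin (α t) (hαD t)
  let Φ : P.weightSpace V μ →ₗ[k] ∀ t : T, P.weightSpace V (μ + P.wt (α t)) :=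
    LinearMap.pi fun t => (LieModule.toEnd k g V (z t)).restrict
      fun _ hv => P.lie_mem_weightSpace_s16 V (hz t) hv
  refine Module.Finite.of_injective Φ ?_
  rw [← LinearMap.ker_eq_bot, LinearMap.ker_eq_bot']
  intro v hv
  have hTv : (T : Set (Module.End k V)) ⊆
      LinearMap.ker (LinearMap.toSpanSingleton (Module.End k V) V v) := by
    intro t ht
    rw [SetLike.mem_coe, LinearMap.mem_ker, LinearMap.toSpanSingleton_apply, Module.End.smul_def]
    exact (LinearMap.congr_fun (hzt ⟨t, ht⟩) v).trans (congrArg Subtype.val (congrFun hv ⟨t, ht⟩))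
  have hhv : LieModule.toEnd k g V h v = 0 := Submodule.span_le.mpr hTv hhT
  have hμv : μ h • (v : V) = 0 := by rw [← v.2 h]; exact hhv
  exact Subtype.ext ((smul_eq_zero.mp hμv).resolve_left hh)

theorem finite_weightSpace_of_nat_relation {ι : Type*} [Fintype ι] [Nonempty ι]
    {μ : Module.Dual k ↥(P.gr 0)} (hμ : μ ≠ 0) (d : ι → Fin n → ℤ) (hd : ∀ i, d i ≠ 0)
    (m : ι → ℕ) (hm : ∀ i, 0 < m i) (hrel : ∑ i, m i • d i = 0)
    (hfin : ∀ i, Module.Finite k ↥(P.weightSpace V (μ + P.wt (d i)))) :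
    Module.Finite k ↥(P.weightSpace V μ) := by
  refine P.finite_weightSpace_of_zero_mem_degreesIn V (D := Set.range d) hμ ?_ ?_
  · exact zero_mem_of_sum_nsmul_eq_zero (fun α hα β hβ hne => P.add_mem_degreesIn hne hα hβ) d
      (fun i => P.mem_degreesIn_actionIdeal V ⟨i, rfl⟩) hd m hm hrel
  · rintro _ ⟨i, rfl⟩
    exact hfin i

end GradedLie

theorem graded_mixed_fin_convex_general
    (k : Type*) [Field k] (n : ℕ)
    (g : Type*) [LieRing g] [LieAlgebra k g] (P : GradedLie k n g)
    (V : Type*) [AddCommGroup V] [Module k V] [LieRingModule g V] [LieModule k g V]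
    (lam : Module.Dual k ↥(P.gr 0))
    (N : ℕ) (hN : 0 < N) (x : Fin N → (Fin n → ℤ)) (a : Fin N → ℝ)
    (hx : ∀ i, Module.Finite k ↥(P.weightSpace V (lam + P.wt (x i))))
    (hpos : ∀ i, 0 < a i) (hsum : ∑ i, a i = 1)
    (y : Fin n → ℤ) (hy : ∀ j : Fin n, (y j : ℝ) = ∑ i, a i * (x i j : ℝ)) :
    lam + P.wt y = 0 ∨ Module.Finite k ↥(P.weightSpace V (lam + P.wt y)) := by
  by_cases hμ : lam + P.wt y = 0
  · exact .inl hμ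
  right
  by_cases hxy : ∃ i, x i = y
  · obtain ⟨i, rfl⟩ := hxy
    exact hx i
  have hrel : ∀ j, ∑ i, a i * ((x i - y) j : ℤ) = 0 := fun j => by
    simp only [Pi.sub_apply, Int.cast_sub, mul_sub, Finset.sum_sub_distrib, ← Finset.sum_mul,
      hsum, one_mul, hy j, sub_self]
  obtain ⟨c, hc, hcrel⟩ := exists_pos_rat_relation_of_real _ a hpos hrel
  obtain ⟨m, hm, hmrel⟩ := exists_pos_nat_relation_of_rat _ c hc hcrel
  have : Nonempty (Fin N) := ⟨⟨0, hN⟩⟩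
  refine P.finite_weightSpace_of_nat_relation V hμ (fun i => x i - y)
    (fun i => sub_ne_zero.mpr (not_exists.mp hxy i)) m hm hmrel fun i => ?_
  rw [add_assoc, ← P.wt_add, add_sub_cancel]
  exact hx i

/-- Convexity for mixed modules: if `μ` is a lattice point
which is a convex combination (inside `ℝⁿ`) of lattice points at which the
weight spaces of a simple mixed module are finite dimensional, then either
`λ + μ` is the zero weight or the weight space at `λ + μ` is also finite
dimensional. -/
theorem graded_mixed_fin_convex
    (k : Type*) [Field k] [IsAlgClosed k] [CharZero k] (n : ℕ) (hn : 0 < n)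
    (g : Type*) [LieRing g] [LieAlgebra k g] (P : GradedLie k n g)
    (V : Type*) [AddCommGroup V] [Module k V] [LieRingModule g V] [LieModule k g V]
    (hsimple : IsSimpleOrder (LieSubmodule k g V))
    (hwt : P.IsWeightModule V)
    (hmix : P.IsMixed V)
    (lam : Module.Dual k ↥(P.gr 0)) (hlam : lam ∈ P.supp V)
    (N : ℕ) (hN : 0 < N) (x : Fin N → (Fin n → ℤ)) (a : Fin N → ℝ)
    (hx : ∀ i, Module.Finite k ↥(P.weightSpace V (lam + P.wt (x i))))
    (hpos : ∀ i, 0 < a i) (hsum : ∑ i, a i = 1)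
    (y : Fin n → ℤ) (hy : ∀ j : Fin n, (y j : ℝ) = ∑ i, a i * (x i j : ℝ)) :
    lam + P.wt y = 0 ∨ Module.Finite k ↥(P.weightSpace V (lam + P.wt y)) :=
  graded_mixed_fin_convex_general k n g P V lam N hN x a hx hpos hsum y hy
end
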